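/- arXiv:2504.20508 — 5 statements merged into one kernel-verified Lean document; each statement's English description precedes it below -/
import Mathlib

section
/- Let x₁,…,xₙ ∈ [0,T] with average μ = (1/n)·∑ᵢ xᵢ where μ ≤ 1 and T > 2. Let S be a uniformly random subset of [n] of size k. Then P[∑_{i∈S} xᵢ > (T/2)·k] ≤ (4(T−1)/T²)^{k/2}. -/
/-!
Put `a i = 1 + (x i / T) (T - 2)`. Bernoulli's inequality gives `(T - 1) ^ (x i / T) ≤ a i`, so
every `S` with `∑_{i ∈ S} x i > T k / 2` has `∏_{i ∈ S} a i ≥ (T - 1) ^ (k / 2)`. By Markov's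
inequality the fraction of such `S` is at most `e_k(a) / (C(n, k) (T - 1) ^ (k / 2))`, and
Maclaurin's inequality `e_k(a) ≤ C(n, k) (mean a) ^ k`, with `mean a ≤ 2 (T - 1) / T`, turns this
into `(2 (T - 1) / T) ^ k / (T - 1) ^ (k / 2) = (4 (T - 1) / T ^ 2) ^ (k / 2)`.

Maclaurin's inequality goes by induction on the number of variables: adding a variable `t` to
`N` variables of mean `m`, Pascal's rule reduces the step to the tangent-line bound
`m ^ (k + 1) + (k + 1) m ^ k (y - m) ≤ y ^ (k + 1)` at the new mean `y = (N m + t) / (N + 1)`.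
-/

open Finset

section

variable {R : Type*} [Field R] [LinearOrder R] [IsStrictOrderedRing R]

theorem choose_mul_pow_add_mul_choose_mul_pow_le {m t : R} (hm : 0 ≤ m) (ht : 0 ≤ t)
    (N k : ℕ) :
    N.choose (k + 1) * m ^ (k + 1) + t * (N.choose k * m ^ k) ≤
      (N + 1).choose (k + 1) * ((N * m + t) / (N + 1)) ^ (k + 1) := by
  have hN : (N + 1 : R) ≠ 0 := by positivity
  obtain ⟨d, hd⟩ : ∃ d : R, (N + 1) * d = t - m := ⟨(t - m) / (N + 1), by field_simp⟩
  have hshift : (N * m + t) / (N + 1) = m + d := by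
    rw [div_eq_iff hN]; linear_combination -hd
  have hbernoulli : m ^ (k + 1) + (k + 1) * m ^ k * d ≤ (m + d) ^ (k + 1) := by
    simpa using pow_add_mul_le_add_pow hm (by rw [two_mul, add_assoc, ← hshift]; positivity) (k + 1)
  have hpascal : ((N + 1).choose (k + 1) : R) = N.choose k + N.choose (k + 1) := by
    exact_mod_cast Nat.choose_succ_succ' N k
  have habsorb : ((N + 1).choose (k + 1) : R) * (k + 1) = (N + 1) * N.choose k := by
    exact_mod_cast (Nat.add_one_mul_choose_eq N k).symm
  calc _ = (N + 1).choose (k + 1) * (m ^ (k + 1) + (k + 1) * m ^ k * d) := by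
        linear_combination -(m ^ k * d) * habsorb - (N.choose k * m ^ k : R) * hd
          - m ^ (k + 1) * hpascal
    _ ≤ _ := by rw [hshift]; gcongr

end

namespace Multiset

variable {R : Type*}

theorem esymm_cons_succ [CommSemiring R] (s : Multiset R) (a : R) (k : ℕ) :
    (a ::ₘ s).esymm (k + 1) = s.esymm (k + 1) + a * s.esymm k := by
  simp [esymm, map_map, sum_map_mul_left]

variable [Field R] [LinearOrder R] [IsStrictOrderedRing R]

theorem card_mul_sum_div_card (s : Multiset R) : card s * (s.sum / card s) = s.sum := by
  by_cases hs : card s = 0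
  · simp [card_eq_zero.1 hs]
  · exact mul_div_cancel₀ _ (Nat.cast_ne_zero.2 hs)

/-- Maclaurin's inequality. -/
theorem esymm_le_choose_mul_pow_sum_div_card (s : Multiset R) (hs : ∀ a ∈ s, 0 ≤ a) (k : ℕ) :
    s.esymm k ≤ (card s).choose k * (s.sum / card s) ^ k := by
  induction s using Multiset.induction_on generalizing k with
  | empty => cases k <;> simp [esymm, powersetCard_zero_right]
  | cons a s ih =>
    rw [forall_mem_cons] at hs
    cases k with
    | zero => simp [esymm]
    | succ k =>
      have hmean : 0 ≤ s.sum / card s := div_nonneg (sum_nonneg hs.2) (Nat.cast_nonneg _)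
      calc (a ::ₘ s).esymm (k + 1) = s.esymm (k + 1) + a * s.esymm k := esymm_cons_succ s a k
        _ ≤ (card s).choose (k + 1) * (s.sum / card s) ^ (k + 1)
            + a * ((card s).choose k * (s.sum / card s) ^ k) := by
          gcongr
          exacts [ih hs.2 _, hs.1, ih hs.2 _]
        _ ≤ _ := by
          convert choose_mul_pow_add_mul_choose_mul_pow_le hmean hs.1 (card s) k using 3
          · simp
          · rw [sum_cons, card_cons, card_mul_sum_div_card]; push_cast; ring

end Multiset

namespace Finset

variable {ι R : Type*} [Field R] [LinearOrder R] [IsStrictOrderedRing R]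

theorem sum_powersetCard_prod_le_choose_mul_pow {s : Finset ι} {a : ι → R}
    (ha : ∀ i ∈ s, 0 ≤ a i) {m : R} (hm : 0 ≤ m) (hsum : ∑ i ∈ s, a i ≤ #s * m) (k : ℕ) :
    ∑ S ∈ s.powersetCard k, ∏ i ∈ S, a i ≤ (#s).choose k * m ^ k := by
  have hmean : 0 ≤ (∑ i ∈ s, a i) / #s := div_nonneg (sum_nonneg ha) (Nat.cast_nonneg _)
  rw [← esymm_map_val]
  calc _ ≤ (#s).choose k * ((∑ i ∈ s, a i) / #s) ^ k := by
        simpa using (s.val.map a).esymm_le_choose_mul_pow_sum_div_card (by simpa using ha) k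
    _ ≤ _ := by
        gcongr
        exact div_le_of_le_mul₀ (Nat.cast_nonneg _) hm (by rwa [mul_comm])

theorem card_filter_mul_le_sum {α : Type*} {s : Finset α} {p : α → Prop} [DecidablePred p]
    {f : α → R} {c : R} (hf : ∀ x ∈ s, 0 ≤ f x) (hc : ∀ x ∈ s, p x → c ≤ f x) :
    #(s.filter p) * c ≤ ∑ x ∈ s, f x :=
  calc #(s.filter p) * c = ∑ _x ∈ s.filter p, c := by rw [sum_const, nsmul_eq_mul]
    _ ≤ ∑ x ∈ s.filter p, f x :=
        sum_le_sum fun x hx => hc x (mem_filter.1 hx).1 (mem_filter.1 hx).2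
    _ ≤ ∑ x ∈ s, f x := sum_le_sum_of_subset_of_nonneg (filter_subset _ _) fun x hx _ => hf x hx

theorem card_filter_powersetCard_div_card_le {s : Finset ι} {a : ι → R}
    (ha : ∀ i ∈ s, 0 ≤ a i) {m c : R} (hm : 0 ≤ m) (hc : 0 < c) (hsum : ∑ i ∈ s, a i ≤ #s * m)
    {k : ℕ} {p : Finset ι → Prop} [DecidablePred p]
    (hp : ∀ S ∈ s.powersetCard k, p S → c ≤ ∏ i ∈ S, a i) :
    (#((s.powersetCard k).filter p) : R) / #(s.powersetCard k) ≤ m ^ k / c := by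
  have hprod : ∀ S ∈ s.powersetCard k, 0 ≤ ∏ i ∈ S, a i := fun S hS =>
    prod_nonneg fun i hi => ha i ((mem_powersetCard.1 hS).1 hi)
  have hmarkov := (card_filter_mul_le_sum hprod hp).trans
    (sum_powersetCard_prod_le_choose_mul_pow ha hm hsum k)
  rw [card_powersetCard]
  refine div_le_of_le_mul₀ (Nat.cast_nonneg _) (by positivity) ?_
  rw [div_mul_eq_mul_div, le_div_iff₀ hc]
  linarith

end Finset

namespace Real

theorem one_add_rpow_le_prod_one_add_mul {ι : Type*} {s : Finset ι} {p : ι → ℝ}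
    (hp : ∀ i ∈ s, p i ∈ Set.Icc (0 : ℝ) 1) {c r : ℝ} (hc : 0 ≤ c) (hr : r ≤ ∑ i ∈ s, p i) :
    (1 + c) ^ r ≤ ∏ i ∈ s, (1 + p i * c) :=
  calc (1 + c) ^ r ≤ (1 + c) ^ ∑ i ∈ s, p i := rpow_le_rpow_of_exponent_le (by linarith) hr
    _ = ∏ i ∈ s, (1 + c) ^ p i := rpow_sum_of_pos (by linarith) _ _
    _ ≤ ∏ i ∈ s, (1 + p i * c) := prod_le_prod (fun _ _ => by positivity) fun i hi =>
        rpow_one_add_le_one_add_mul_self (by linarith) (hp i hi).1 (hp i hi).2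

theorem pow_div_rpow_div_two {a b : ℝ} (ha : 0 ≤ a) (hb : 0 < b) (k : ℕ) :
    a ^ k / b ^ ((k : ℝ) / 2) = (a ^ 2 / b) ^ ((k : ℝ) / 2) := by
  rw [div_rpow (by positivity) hb.le, ← rpow_natCast_mul ha, Nat.cast_ofNat,
    mul_div_cancel₀ _ two_ne_zero, rpow_natCast]

end Real

open scoped Classical

theorem hoeffding_tail_bound_without_replacement_general {n : ℕ}
    (k : ℕ) (T : ℝ) (hT : 2 < T)
    (x : Fin n → ℝ) (hx : ∀ i, x i ∈ Set.Icc (0:ℝ) T)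
    (hμ : (1/(n:ℝ)) * ∑ i, x i ≤ 1) :
    (((Finset.powersetCard k (Finset.univ : Finset (Fin n))).filter
        (fun S : Finset (Fin n) => (T/2) * k < ∑ i ∈ S, x i)).card : ℝ)
      / ((Finset.powersetCard k (Finset.univ : Finset (Fin n))).card : ℝ)
      ≤ (4*(T-1)/T^2) ^ ((k:ℝ)/2) := by
  have hT0 : 0 < T := by linarith
  have hT1 : 0 < T - 1 := by linarith
  have hxT : ∀ i, x i / T ∈ Set.Icc (0 : ℝ) 1 := fun i =>
    ⟨div_nonneg (hx i).1 hT0.le, div_le_one_of_le₀ (hx i).2 hT0.le⟩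
  have hsum : ∑ i, x i ≤ n := by
    rcases Nat.eq_zero_or_pos n with rfl | hn
    · simp
    · rwa [one_div, inv_mul_le_iff₀ (by positivity), mul_one] at hμ
  set a : Fin n → ℝ := fun i => 1 + x i / T * (T - 2)
  have ha : ∀ i ∈ univ, 0 ≤ a i := fun i _ =>
    add_nonneg zero_le_one (mul_nonneg (hxT i).1 (by linarith))
  have hasum : ∑ i, a i ≤ #(univ : Finset (Fin n)) * (2 * (T - 1) / T) := by
    simp only [a, sum_add_distrib, ← sum_mul, ← sum_div, sum_const, card_univ, Fintype.card_fin,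
      nsmul_eq_mul, mul_one]
    calc _ ≤ (n : ℝ) + n / T * (T - 2) := by gcongr
      _ = _ := by field_simp; ring
  have hbad : ∀ S ∈ powersetCard k univ, (T / 2) * k < ∑ i ∈ S, x i →
      (T - 1) ^ ((k : ℝ) / 2) ≤ ∏ i ∈ S, a i := fun S _ hS => by
    convert Real.one_add_rpow_le_prod_one_add_mul (fun i _ => hxT i) (by linarith : 0 ≤ T - 2)
      (s := S) (r := (k : ℝ) / 2) (by rw [← sum_div, le_div_iff₀ hT0]; linarith) using 2
    ring
  calc _ ≤ (2 * (T - 1) / T) ^ k / (T - 1) ^ ((k : ℝ) / 2) :=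
        card_filter_powersetCard_div_card_le ha (by positivity) (by positivity) hasum hbad
    _ = _ := by
        rw [Real.pow_div_rpow_div_two (by positivity) hT1]
        congr 1
        field_simp
        ring

theorem hoeffding_tail_bound_without_replacement {n : ℕ} (hn : 0 < n)
    (k : ℕ) (hk : k ≤ n) (T : ℝ) (hT : 2 < T)
    (x : Fin n → ℝ) (hx : ∀ i, x i ∈ Set.Icc (0:ℝ) T)
    (hμ : (1/(n:ℝ)) * ∑ i, x i ≤ 1) :
    (((Finset.powersetCard k (Finset.univ : Finset (Fin n))).filter
        (fun S : Finset (Fin n) => (T/2) * k < ∑ i ∈ S, x i)).card : ℝ)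
      / ((Finset.powersetCard k (Finset.univ : Finset (Fin n))).card : ℝ)
      ≤ (4*(T-1)/T^2) ^ ((k:ℝ)/2) :=
  hoeffding_tail_bound_without_replacement_general k T hT x hx hμ
end

section
/- Consider participatory budgeting with m ≥ 2 projects, budget B with 0 < B < m, and cost functions that are monotone and 1-Lipschitz from [0,1]^m (with ℓ₁ norm) to [0,1]. For any panel size k ≥ 1 and any panel decision function x̃ mapping k cost functions to a feasible allocation in X_B = {x ∈ [0,1]^m : ∑ⱼ xⱼ ≤ B}, there exists an instance with n agents such that the optimal social cost is 0 while the expected social cost of x̃ over a uniformly random size-k panel is strictly positive. Consequently, for every ρ > 1, E[SocialCost(x̃(S))] > ρ·SocialOpt. -/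
open scoped Classical

/-- Auxiliary cost function `Cost⁰`: average shortfall below level `p`. -/
noncomputable def pbC0 (m : ℕ) (p : ℝ) : (Fin m → ℝ) → ℝ :=
  fun x => (1 / (m : ℝ)) * ∑ j, max (p - x j) 0

/-- Auxiliary cost function `Cost^t`: shortfall of coordinate `t` below level `q`. -/
noncomputable def pbCt (m : ℕ) (q : ℝ) (t : Fin m) : (Fin m → ℝ) → ℝ :=
  fun x => max (q - x t) 0

lemma pbC0_nonneg (m : ℕ) (p : ℝ) (x : Fin m → ℝ) : 0 ≤ pbC0 m p x :=
  mul_nonneg (by positivity) (Finset.sum_nonneg fun j _ => le_max_right _ _)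

lemma pbCt_nonneg (m : ℕ) (q : ℝ) (t : Fin m) (x : Fin m → ℝ) : 0 ≤ pbCt m q t x :=
  le_max_right _ _

lemma pbC0_anti (m : ℕ) (p : ℝ) {a b : Fin m → ℝ} (h : ∀ j, a j ≤ b j) :
    pbC0 m p b ≤ pbC0 m p a := by
  unfold pbC0
  refine mul_le_mul_of_nonneg_left (Finset.sum_le_sum fun j _ => ?_) (by positivity)
  exact max_le_max (by linarith [h j]) le_rfl

lemma pbCt_anti (m : ℕ) (q : ℝ) (t : Fin m) {a b : Fin m → ℝ} (h : ∀ j, a j ≤ b j) :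
    pbCt m q t b ≤ pbCt m q t a :=
  max_le_max (by linarith [h t]) le_rfl

lemma pbC0_lip (m : ℕ) (hm : 1 ≤ m) (p : ℝ) (a b : Fin m → ℝ) :
    |pbC0 m p a - pbC0 m p b| ≤ ∑ j, |a j - b j| := by
  have hm0 : (0:ℝ) < m := by exact_mod_cast Nat.lt_of_lt_of_le Nat.zero_lt_one hm
  unfold pbC0
  rw [← mul_sub, abs_mul, abs_of_nonneg (by positivity : (0:ℝ) ≤ 1 / (m:ℝ)),
      ← Finset.sum_sub_distrib]
  have h1 : |∑ j, (max (p - a j) 0 - max (p - b j) 0)| ≤ ∑ j, |a j - b j| := by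
    refine le_trans (Finset.abs_sum_le_sum_abs _ _) (Finset.sum_le_sum fun j _ => ?_)
    calc |max (p - a j) 0 - max (p - b j) 0| ≤ |(p - a j) - (p - b j)| :=
          abs_max_sub_max_le_abs _ _ _
      _ = |a j - b j| := by rw [abs_sub_comm]; ring_nf
  calc (1 / (m:ℝ)) * |∑ j, (max (p - a j) 0 - max (p - b j) 0)|
      ≤ (1 / (m:ℝ)) * ∑ j, |a j - b j| := by
        exact mul_le_mul_of_nonneg_left h1 (by positivity)
    _ ≤ 1 * ∑ j, |a j - b j| := by
        refine mul_le_mul_of_nonneg_right ?_ (Finset.sum_nonneg fun j _ => abs_nonneg _)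
        rw [div_le_one hm0]; exact_mod_cast hm
    _ = ∑ j, |a j - b j| := one_mul _

lemma pbCt_lip (m : ℕ) (q : ℝ) (t : Fin m) (a b : Fin m → ℝ) :
    |pbCt m q t a - pbCt m q t b| ≤ ∑ j, |a j - b j| := by
  calc |pbCt m q t a - pbCt m q t b| ≤ |(q - a t) - (q - b t)| :=
        abs_max_sub_max_le_abs _ _ _
    _ = |a t - b t| := by rw [abs_sub_comm]; ring_nf
    _ ≤ ∑ j, |a j - b j| :=
        Finset.single_le_sum (f := fun j => |a j - b j|) (fun j _ => abs_nonneg _)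
          (Finset.mem_univ t)

lemma pbC0_le (m : ℕ) (hm : 1 ≤ m) {p : ℝ} (hp : 0 ≤ p) {x : Fin m → ℝ}
    (hx : ∀ j, 0 ≤ x j) : pbC0 m p x ≤ p := by
  have hm0 : (0:ℝ) < m := by exact_mod_cast Nat.lt_of_lt_of_le Nat.zero_lt_one hm
  unfold pbC0
  have h1 : ∑ j, max (p - x j) 0 ≤ ∑ _j : Fin m, p :=
    Finset.sum_le_sum fun j _ => max_le (by linarith [hx j]) hp
  have h2 : ∑ _j : Fin m, p = (m:ℝ) * p := by
    rw [Finset.sum_const, Finset.card_univ, Fintype.card_fin, nsmul_eq_mul]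
  calc (1 / (m:ℝ)) * ∑ j, max (p - x j) 0 ≤ (1 / (m:ℝ)) * ((m:ℝ) * p) := by
        refine mul_le_mul_of_nonneg_left ?_ (by positivity); rw [← h2]; exact h1
    _ = p := by field_simp

lemma pbC0_eq_zero (m : ℕ) (hm : 1 ≤ m) {p : ℝ} {x : Fin m → ℝ}
    (h : pbC0 m p x = 0) : ∀ j, p ≤ x j := by
  have hm0 : (0:ℝ) < m := by exact_mod_cast Nat.lt_of_lt_of_le Nat.zero_lt_one hm
  intro j
  by_contra hlt
  push_neg at hlt
  have hpos : 0 < ∑ j, max (p - x j) 0 :=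
    Finset.sum_pos' (fun j _ => le_max_right _ _)
      ⟨j, Finset.mem_univ j, lt_max_iff.mpr (Or.inl (by linarith))⟩
  have : 0 < pbC0 m p x := mul_pos (by positivity) hpos
  linarith [h ▸ this]

theorem pb_no_multiplicative_guarantee (m : ℕ) (hm : 2 ≤ m) (B : ℝ)
    (hB0 : 0 < B) (hBm : B < m) (k : ℕ) (hk : 1 ≤ k)
    (xt : Multiset ((Fin m → ℝ) → ℝ) → (Fin m → ℝ))
    (hfeas : ∀ c, (∀ j, xt c j ∈ Set.Icc (0:ℝ) 1) ∧ ∑ j, xt c j ≤ B) :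
    ∃ (n : ℕ) (cost : Fin n → (Fin m → ℝ) → ℝ),
      k ≤ n ∧ 0 < n ∧
      -- each agent's cost function is monotone (decreasing in the allocation),
      -- 1-Lipschitz w.r.t. the ℓ₁ norm, and valued in [0,1] on [0,1]^m
      (∀ i : Fin n,
        (∀ a b : Fin m → ℝ, (∀ j, a j ≤ b j) → cost i b ≤ cost i a) ∧
        (∀ a b : Fin m → ℝ, |cost i a - cost i b| ≤ ∑ j, |a j - b j|) ∧
        (∀ a : Fin m → ℝ, (∀ j, a j ∈ Set.Icc (0:ℝ) 1) → cost i a ∈ Set.Icc (0:ℝ) 1)) ∧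
      -- the optimal social cost is 0
      sInf {v : ℝ | ∃ a : Fin m → ℝ, (∀ j, a j ∈ Set.Icc (0:ℝ) 1) ∧ (∑ j, a j ≤ B) ∧
          v = (1/(n:ℝ)) * ∑ i, cost i a} = 0 ∧
      -- the expected social cost of the panel decision is strictly positive
      0 < (∑ S ∈ Finset.powersetCard k (Finset.univ : Finset (Fin n)),
            (1/(n:ℝ)) * ∑ i, cost i (xt (S.val.map cost)))
          / ((Finset.powersetCard k (Finset.univ : Finset (Fin n))).card : ℝ) ∧
      -- hence no multiplicative approximation is possible
      (∀ ρ : ℝ, 1 < ρ →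
        ρ * sInf {v : ℝ | ∃ a : Fin m → ℝ, (∀ j, a j ∈ Set.Icc (0:ℝ) 1) ∧ (∑ j, a j ≤ B) ∧
            v = (1/(n:ℝ)) * ∑ i, cost i a}
        < (∑ S ∈ Finset.powersetCard k (Finset.univ : Finset (Fin n)),
            (1/(n:ℝ)) * ∑ i, cost i (xt (S.val.map cost)))
          / ((Finset.powersetCard k (Finset.univ : Finset (Fin n))).card : ℝ)) := by
  have hm1 : 1 ≤ m := le_trans (by norm_num) hm
  have hm0 : (0:ℝ) < m := by exact_mod_cast Nat.lt_of_lt_of_le Nat.zero_lt_one hm1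
  have hm2 : (2:ℝ) ≤ (m:ℝ) := by exact_mod_cast hm
  have hBmdiv : B / m < 1 := (div_lt_one hm0).mpr hBm
  -- the budget split B = B₁ + B₂, with p = B₂/m and q = B₁ + B₂/m
  set B₁ : ℝ := min B (1 - B / m) / 2 with hB₁def
  have hB₁pos : 0 < B₁ := by
    have h1 : 0 < min B (1 - B / m) := lt_min hB0 (by linarith)
    rw [hB₁def]; linarith
  have hB₁leB : B₁ ≤ B / 2 := by
    rw [hB₁def]; have := min_le_left B (1 - B / m); linarith
  have hB₁le1 : B₁ ≤ (1 - B / m) / 2 := by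
    rw [hB₁def]; have := min_le_right B (1 - B / m); linarith
  set p : ℝ := (B - B₁) / m with hpdef
  set q : ℝ := B₁ + p with hqdef
  have hp0 : 0 < p := div_pos (by linarith) hm0
  have hmp : (m:ℝ) * p = B - B₁ := by rw [hpdef]; field_simp
  have hpB : p ≤ B / m := by rw [hpdef]; gcongr; linarith
  have hq1 : q ≤ 1 := by
    have : B / m ≤ 1 := le_of_lt hBmdiv
    rw [hqdef]; nlinarith [hpB, hB₁le1]
  have hp1 : p < 1 := by rw [hqdef] at hq1; linarith
  -- indices
  set j0 : Fin m := ⟨0, by omega⟩ with hj0def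
  set j1 : Fin m := ⟨1, by omega⟩ with hj1def
  have hj01 : j0 ≠ j1 := by
    intro h; rw [hj0def, hj1def] at h; exact absurd (congrArg Fin.val h) (by norm_num)
  -- the decision on the all-Cost⁰ panel
  set y : Fin m → ℝ := xt (Multiset.replicate k (pbC0 m p)) with hydef
  obtain ⟨hyIcc, hysum⟩ := hfeas (Multiset.replicate k (pbC0 m p))
  rw [← hydef] at hysum
  -- the special coordinate
  set t : Fin m := if y j0 < q then j0 else j1 with htdef
  -- the cost functions
  set cost : Fin (k+1) → (Fin m → ℝ) → ℝ :=
    fun i => if i = Fin.last k then pbCt m q t else pbC0 m p with hcostdef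
  have hcost_nonneg : ∀ i x, 0 ≤ cost i x := by
    intro i x
    rw [hcostdef]
    by_cases h : i = Fin.last k
    · simp only [h, if_pos rfl]; exact pbCt_nonneg m q t x
    · simp only [if_neg h]; exact pbC0_nonneg m p x
  -- the optimum allocation
  set aopt : Fin m → ℝ := fun j => p + (if j = t then B₁ else 0) with haoptdef
  have haopt_ge : ∀ j, p ≤ aopt j := by
    intro j; rw [haoptdef]; dsimp only; split <;> linarith
  have haopt_le : ∀ j, aopt j ≤ q := by
    intro j; rw [haoptdef, hqdef]; dsimp only; split <;> linarith
  have haopt_t : aopt t = q := by rw [haoptdef, hqdef]; simp [add_comm]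
  have haopt_Icc : ∀ j, aopt j ∈ Set.Icc (0:ℝ) 1 :=
    fun j => ⟨le_trans hp0.le (haopt_ge j), le_trans (haopt_le j) hq1⟩
  have haopt_sum : ∑ j, aopt j ≤ B := by
    have h1 : ∑ j, aopt j = (∑ _j : Fin m, p) + ∑ j, (if j = t then B₁ else 0) := by
      rw [haoptdef, Finset.sum_add_distrib]
    have h2 : (∑ _j : Fin m, p) = (m:ℝ) * p := by
      rw [Finset.sum_const, Finset.card_univ, Fintype.card_fin, nsmul_eq_mul]
    have h3 : ∑ j, (if j = t then B₁ else 0) = B₁ := by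
      rw [Finset.sum_ite_eq' Finset.univ t (fun _ => B₁), if_pos (Finset.mem_univ t)]
    rw [h1, h2, h3, hmp]; linarith
  have haopt_cost : ∀ i, cost i aopt = 0 := by
    intro i
    have hiv : cost i = if i = Fin.last k then pbCt m q t else pbC0 m p := by rw [hcostdef]
    by_cases h : i = Fin.last k
    · rw [hiv, if_pos h]
      show max (q - aopt t) 0 = 0
      rw [haopt_t, sub_self, max_self]
    · rw [hiv, if_neg h]
      show (1 / (m : ℝ)) * ∑ j, max (p - aopt j) 0 = 0
      have : ∑ j, max (p - aopt j) 0 = 0 := by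
        refine Finset.sum_eq_zero fun j _ => ?_
        rw [max_eq_right]; linarith [haopt_ge j]
      rw [this, mul_zero]
  -- the feasible-social-cost set
  set A : Set ℝ := {v : ℝ | ∃ a : Fin m → ℝ, (∀ j, a j ∈ Set.Icc (0:ℝ) 1) ∧ (∑ j, a j ≤ B) ∧
      v = (1/((k+1:ℕ):ℝ)) * ∑ i, cost i a} with hAdef
  have h0A : (0:ℝ) ∈ A := by
    refine ⟨aopt, haopt_Icc, haopt_sum, ?_⟩
    rw [Finset.sum_congr rfl (fun i _ => haopt_cost i), Finset.sum_const, smul_zero, mul_zero]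
  have hA_nonneg : ∀ v ∈ A, (0:ℝ) ≤ v := by
    rintro v ⟨a, _, _, rfl⟩
    have : (0:ℝ) ≤ ∑ i, cost i a := Finset.sum_nonneg fun i _ => hcost_nonneg i a
    positivity
  have hInf : sInf A = 0 :=
    le_antisymm (csInf_le ⟨0, hA_nonneg⟩ h0A) (le_csInf ⟨0, h0A⟩ hA_nonneg)
  -- the all-Cost⁰ panel
  set S0 : Finset (Fin (k+1)) := {Fin.last k}ᶜ with hS0def
  have hS0mem : S0 ∈ Finset.powersetCard k (Finset.univ : Finset (Fin (k+1))) := by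
    rw [Finset.mem_powersetCard]
    refine ⟨Finset.subset_univ _, ?_⟩
    rw [hS0def, Finset.card_compl, Finset.card_singleton, Fintype.card_fin]
    omega
  have hS0card : S0.card = k := (Finset.mem_powersetCard.mp hS0mem).2
  have hS0map : S0.val.map cost = Multiset.replicate k (pbC0 m p) := by
    have h1 : ∀ i ∈ S0.val, cost i = pbC0 m p := by
      intro i hi
      have hne : i ≠ Fin.last k := by
        have := Finset.mem_compl.mp (by exact hi : i ∈ S0)
        simpa using this
      rw [hcostdef]; exact if_neg hne
    rw [Multiset.map_congr rfl h1, Multiset.map_const']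
    have hc : Multiset.card S0.val = k := hS0card
    rw [hc]
  -- key positivity on the all-Cost⁰ panel
  have hyge : (0:ℝ) ≤ pbC0 m p y := pbC0_nonneg m p y
  have hex : ∃ i : Fin (k+1), 0 < cost i y := by
    by_cases h0 : 0 < pbC0 m p y
    · refine ⟨⟨0, by omega⟩, ?_⟩
      have hne : (⟨0, by omega⟩ : Fin (k+1)) ≠ Fin.last k := by
        intro h
        have := congrArg Fin.val h
        simp [Fin.last] at this
        omega
      show 0 < cost ⟨0, by omega⟩ y
      have : cost ⟨0, by omega⟩ = pbC0 m p := by rw [hcostdef]; exact if_neg hne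
      rw [this]; exact h0
    · have hz : pbC0 m p y = 0 := le_antisymm (not_lt.mp h0) hyge
      have hyp : ∀ j, p ≤ y j := pbC0_eq_zero m hm1 hz
      refine ⟨Fin.last k, ?_⟩
      have hcl : cost (Fin.last k) = pbCt m q t := by rw [hcostdef]; exact if_pos rfl
      rw [hcl]
      by_cases hc : y j0 < q
      · have ht : t = j0 := by rw [htdef, if_pos hc]
        simp only [pbCt, ht]
        exact lt_max_iff.mpr (Or.inl (by linarith))
      · have ht : t = j1 := by rw [htdef, if_neg hc]
        have hy0 : q ≤ y j0 := not_lt.mp hc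
        have hy1 : y j1 < q := by
          by_contra hge
          push_neg at hge
          have hsub : ({j0, j1} : Finset (Fin m)) ⊆ Finset.univ := Finset.subset_univ _
          have hle : ∑ j ∈ ({j0, j1} : Finset (Fin m)), (y j - p) ≤ ∑ j, (y j - p) :=
            Finset.sum_le_sum_of_subset_of_nonneg hsub
              (fun j _ _ => by linarith [hyp j])
          rw [Finset.sum_pair hj01] at hle
          have hsum2 : ∑ j, (y j - p) = (∑ j, y j) - (m:ℝ) * p := by
            rw [Finset.sum_sub_distrib, Finset.sum_const, Finset.card_univ,
              Fintype.card_fin, nsmul_eq_mul]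
          rw [hsum2, hmp] at hle
          rw [hqdef] at hy0 hge
          linarith
        simp only [pbCt, ht]
        exact lt_max_iff.mpr (Or.inl (by linarith))
  have hsumy : 0 < ∑ i, cost i y := by
    obtain ⟨i, hi⟩ := hex
    exact Finset.sum_pos' (fun i _ => hcost_nonneg i y) ⟨i, Finset.mem_univ i, hi⟩
  -- expected social cost positive
  have hterm_nonneg : ∀ S ∈ Finset.powersetCard k (Finset.univ : Finset (Fin (k+1))),
      (0:ℝ) ≤ (1/((k+1:ℕ):ℝ)) * ∑ i, cost i (xt (S.val.map cost)) := by
    intro S _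
    have : (0:ℝ) ≤ ∑ i, cost i (xt (S.val.map cost)) :=
      Finset.sum_nonneg fun i _ => hcost_nonneg i _
    positivity
  have hterm_pos : 0 < (1/((k+1:ℕ):ℝ)) * ∑ i, cost i (xt (S0.val.map cost)) := by
    rw [hS0map, ← hydef]
    have hn : (0:ℝ) < ((k+1:ℕ):ℝ) := by positivity
    positivity
  have hnum : 0 < ∑ S ∈ Finset.powersetCard k (Finset.univ : Finset (Fin (k+1))),
      (1/((k+1:ℕ):ℝ)) * ∑ i, cost i (xt (S.val.map cost)) :=
    Finset.sum_pos' hterm_nonneg ⟨S0, hS0mem, hterm_pos⟩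
  have hden : (0:ℝ) <
      ((Finset.powersetCard k (Finset.univ : Finset (Fin (k+1)))).card : ℝ) := by
    have : 0 < (Finset.powersetCard k (Finset.univ : Finset (Fin (k+1)))).card :=
      Finset.card_pos.mpr ⟨S0, hS0mem⟩
    exact_mod_cast this
  have hE : 0 < (∑ S ∈ Finset.powersetCard k (Finset.univ : Finset (Fin (k+1))),
      (1/((k+1:ℕ):ℝ)) * ∑ i, cost i (xt (S.val.map cost)))
      / ((Finset.powersetCard k (Finset.univ : Finset (Fin (k+1)))).card : ℝ) :=
    div_pos hnum hden
  -- monotonicity, Lipschitz continuity and boundedness of each cost function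
  have hprops : ∀ i : Fin (k+1),
      (∀ a b : Fin m → ℝ, (∀ j, a j ≤ b j) → cost i b ≤ cost i a) ∧
      (∀ a b : Fin m → ℝ, |cost i a - cost i b| ≤ ∑ j, |a j - b j|) ∧
      (∀ a : Fin m → ℝ, (∀ j, a j ∈ Set.Icc (0:ℝ) 1) → cost i a ∈ Set.Icc (0:ℝ) 1) := by
    intro i
    have hiv : cost i = if i = Fin.last k then pbCt m q t else pbC0 m p := by rw [hcostdef]
    by_cases h : i = Fin.last k
    · rw [hiv, if_pos h]
      refine ⟨fun a b hab => pbCt_anti m q t hab, fun a b => pbCt_lip m q t a b,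
        fun a ha => ⟨pbCt_nonneg m q t a, ?_⟩⟩
      have h1 : q - a t ≤ q := by linarith [(ha t).1]
      have h2 : pbCt m q t a ≤ q := max_le h1 (by linarith [hB₁pos, hp0])
      linarith
    · rw [hiv, if_neg h]
      refine ⟨fun a b hab => pbC0_anti m p hab, fun a b => pbC0_lip m hm1 p a b,
        fun a ha => ⟨pbC0_nonneg m p a, ?_⟩⟩
      have := pbC0_le m hm1 hp0.le (fun j => (ha j).1)
      linarith
  exact ⟨k + 1, cost, by omega, Nat.succ_pos k, hprops, hInf, hE, by
    intro ρ _
    rw [hInf, mul_zero]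
    exact hE⟩
end

section
/- In the multiple facility location problem on X = [0,1] with candidate set C = {0, 1/2, 1} and ℓ = 2 facilities, for any k < n and any panel decision function q̃ : X^k → C², there exist agent locations x₁,…,xₙ ∈ [0,1] such that the optimal social cost is 0 but the expected social cost of q̃ over a uniformly random size-k panel is strictly positive; hence no multiplicative approximation ρ·SocialOpt is achievable for any ρ > 1. -/
open scoped Classical

lemma exists_third_candidate (u v : ℝ) (hu : u ∈ ({0, 1/2, 1} : Set ℝ))
    (hv : v ∈ ({0, 1/2, 1} : Set ℝ)) :
    ∃ b ∈ ({0, 1/2, 1} : Set ℝ), b ≠ u ∧ b ≠ v := by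
  simp only [Set.mem_insert_iff, Set.mem_singleton_iff] at hu hv
  rcases hu with h | h | h <;> rcases hv with h' | h' | h' <;>
    first
      | (refine ⟨0, by norm_num, ?_, ?_⟩ <;> (norm_num [h, h']; done))
      | (refine ⟨1/2, by norm_num, ?_, ?_⟩ <;> (norm_num [h, h']; done))
      | (refine ⟨1, by norm_num, ?_, ?_⟩ <;> (norm_num [h, h']; done))

theorem multifacility_no_multiplicative_guarantee (n k : ℕ) (hk0 : 0 < k) (hkn : k < n)
    (qt : Multiset ℝ → ℝ × ℝ)
    (hqt : ∀ ms, (qt ms).1 ∈ ({0, 1/2, 1} : Set ℝ) ∧ (qt ms).2 ∈ ({0, 1/2, 1} : Set ℝ)) :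
    ∃ x : Fin n → ℝ, (∀ i, x i ∈ Set.Icc (0:ℝ) 1) ∧
      -- the optimal social cost over pairs of candidate facilities is 0
      sInf {v : ℝ | ∃ y₁ ∈ ({0, 1/2, 1} : Set ℝ), ∃ y₂ ∈ ({0, 1/2, 1} : Set ℝ),
          v = (1/(n:ℝ)) * ∑ i, min |x i - y₁| |x i - y₂|} = 0 ∧
      -- the expected social cost of the panel decision is strictly positive
      0 < (∑ S ∈ Finset.powersetCard k (Finset.univ : Finset (Fin n)),
            (1/(n:ℝ)) * ∑ i, min |x i - (qt (S.val.map x)).1| |x i - (qt (S.val.map x)).2|)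
          / ((Finset.powersetCard k (Finset.univ : Finset (Fin n))).card : ℝ) ∧
      -- hence no multiplicative approximation is possible
      (∀ ρ : ℝ, 1 < ρ →
        ρ * sInf {v : ℝ | ∃ y₁ ∈ ({0, 1/2, 1} : Set ℝ), ∃ y₂ ∈ ({0, 1/2, 1} : Set ℝ),
            v = (1/(n:ℝ)) * ∑ i, min |x i - y₁| |x i - y₂|}
        < (∑ S ∈ Finset.powersetCard k (Finset.univ : Finset (Fin n)),
            (1/(n:ℝ)) * ∑ i, min |x i - (qt (S.val.map x)).1| |x i - (qt (S.val.map x)).2|)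
          / ((Finset.powersetCard k (Finset.univ : Finset (Fin n))).card : ℝ)) := by
  have hn : 0 < n := lt_trans hk0 hkn
  set ms : Multiset ℝ := Multiset.replicate k (0:ℝ) with hms_def
  obtain ⟨b, hbC, hb1, hb2⟩ :=
    exists_third_candidate (qt ms).1 (qt ms).2 (hqt ms).1 (hqt ms).2
  set last : Fin n := ⟨n - 1, by omega⟩ with hlast_def
  set x : Fin n → ℝ := fun i => if i = last then b else 0 with hx_def
  have hbIcc : b ∈ Set.Icc (0:ℝ) 1 := by
    simp only [Set.mem_insert_iff, Set.mem_singleton_iff] at hbC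
    rcases hbC with h | h | h <;> rw [h] <;> constructor <;> norm_num
  have hxIcc : ∀ i, x i ∈ Set.Icc (0:ℝ) 1 := by
    intro i
    by_cases hi : i = last
    · simpa [hx_def, hi] using hbIcc
    · simp [hx_def, hi]
  -- the optimum is 0
  have hmem0 : (0:ℝ) ∈ {v : ℝ | ∃ y₁ ∈ ({0, 1/2, 1} : Set ℝ), ∃ y₂ ∈ ({0, 1/2, 1} : Set ℝ),
      v = (1/(n:ℝ)) * ∑ i, min |x i - y₁| |x i - y₂|} := by
    refine ⟨0, by norm_num, b, hbC, ?_⟩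
    have : ∀ i ∈ (Finset.univ : Finset (Fin n)), min |x i - 0| |x i - b| = 0 := by
      intro i _
      by_cases hi : i = last
      · simp [hx_def, hi, min_eq_right (abs_nonneg b)]
      · simp [hx_def, hi, min_eq_left (abs_nonneg b)]
    rw [Finset.sum_congr rfl this]
    simp
  have hlb : ∀ v ∈ {v : ℝ | ∃ y₁ ∈ ({0, 1/2, 1} : Set ℝ), ∃ y₂ ∈ ({0, 1/2, 1} : Set ℝ),
      v = (1/(n:ℝ)) * ∑ i, min |x i - y₁| |x i - y₂|}, (0:ℝ) ≤ v := by
    rintro v ⟨y₁, _, y₂, _, rfl⟩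
    apply mul_nonneg (by positivity)
    exact Finset.sum_nonneg fun i _ => le_min (abs_nonneg _) (abs_nonneg _)
  have hInf : sInf {v : ℝ | ∃ y₁ ∈ ({0, 1/2, 1} : Set ℝ), ∃ y₂ ∈ ({0, 1/2, 1} : Set ℝ),
      v = (1/(n:ℝ)) * ∑ i, min |x i - y₁| |x i - y₂|} = 0 :=
    le_antisymm (csInf_le ⟨0, hlb⟩ hmem0) (le_csInf ⟨0, hmem0⟩ hlb)
  -- pick a panel avoiding `last`
  obtain ⟨S₀, hS₀sub, hS₀card⟩ :
      ∃ S₀ ⊆ ({last} : Finset (Fin n))ᶜ, S₀.card = k := by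
    apply Finset.exists_subset_card_eq
    simp only [Finset.card_compl, Finset.card_singleton, Fintype.card_fin]
    omega
  have hS₀mem : S₀ ∈ Finset.powersetCard k (Finset.univ : Finset (Fin n)) := by
    rw [Finset.mem_powersetCard]
    exact ⟨Finset.subset_univ _, hS₀card⟩
  have hS₀zero : ∀ i ∈ S₀, x i = 0 := by
    intro i hi
    have : i ≠ last := by
      have := hS₀sub hi
      simpa [Finset.mem_compl] using this
    simp [hx_def, this]
  have hmap : S₀.val.map x = ms := by
    rw [hms_def]
    apply Multiset.eq_replicate.mpr
    constructor
    · rw [Multiset.card_map]; exact hS₀card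
    · intro a ha
      obtain ⟨i, hi, rfl⟩ := Multiset.mem_map.mp ha
      exact hS₀zero i hi
  -- each panel term is nonnegative
  have hterm_nonneg : ∀ S ∈ Finset.powersetCard k (Finset.univ : Finset (Fin n)),
      (0:ℝ) ≤ (1/(n:ℝ)) * ∑ i, min |x i - (qt (S.val.map x)).1| |x i - (qt (S.val.map x)).2| := by
    intro S _
    apply mul_nonneg (by positivity)
    exact Finset.sum_nonneg fun i _ => le_min (abs_nonneg _) (abs_nonneg _)
  -- the term at S₀ is positive
  have hterm_pos : (0:ℝ) <
      (1/(n:ℝ)) * ∑ i, min |x i - (qt (S₀.val.map x)).1| |x i - (qt (S₀.val.map x)).2| := by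
    rw [hmap]
    apply mul_pos (by positivity)
    apply Finset.sum_pos' (fun i _ => le_min (abs_nonneg _) (abs_nonneg _))
    refine ⟨last, Finset.mem_univ _, ?_⟩
    have hx_last : x last = b := by simp [hx_def]
    rw [hx_last]
    exact lt_min (abs_pos.mpr (sub_ne_zero.mpr hb1)) (abs_pos.mpr (sub_ne_zero.mpr hb2))
  have hsum_pos : (0:ℝ) < ∑ S ∈ Finset.powersetCard k (Finset.univ : Finset (Fin n)),
      (1/(n:ℝ)) * ∑ i, min |x i - (qt (S.val.map x)).1| |x i - (qt (S.val.map x)).2| :=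
    Finset.sum_pos' hterm_nonneg ⟨S₀, hS₀mem, hterm_pos⟩
  have hcard_pos : (0:ℝ) <
      ((Finset.powersetCard k (Finset.univ : Finset (Fin n))).card : ℝ) := by
    rw [Finset.card_powersetCard, Finset.card_univ, Fintype.card_fin]
    exact_mod_cast Nat.choose_pos (le_of_lt hkn)
  have hpos : (0:ℝ) < (∑ S ∈ Finset.powersetCard k (Finset.univ : Finset (Fin n)),
      (1/(n:ℝ)) * ∑ i, min |x i - (qt (S.val.map x)).1| |x i - (qt (S.val.map x)).2|)
      / ((Finset.powersetCard k (Finset.univ : Finset (Fin n))).card : ℝ) :=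
    div_pos hsum_pos hcard_pos
  exact ⟨x, hxIcc, hInf, hpos, fun ρ _ => by rw [hInf, mul_zero]; exact hpos⟩
end

section
/- Let (X,d) be a metric space, x₁,…,xₙ agent locations, and ℓ ≥ 1. For any nonempty panel S ⊆ [n], let ȳ(S) ∈ C^ℓ minimize the panel cost (1/|S|)·∑_{i∈S} min_j d(xᵢ, yⱼ) over y ∈ C^ℓ. Then SocialCost(ȳ(S)) ≤ PanelOpt(S) + W(φ^{[n]}, φ^S), where φ^{[n]} and φ^S are the empirical distributions of agent locations over [n] and over S, W is the Wasserstein-1 distance, SocialCost(y) = (1/n)·∑ᵢ min_j d(xᵢ, yⱼ), and PanelOpt(S) = (1/|S|)·∑_{i∈S} min_j d(xᵢ, ȳ(S)ⱼ). -/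
open scoped Classical

/-- Wasserstein-1 distance between finitely supported distributions on a metric
space, defined as the infimum over couplings of the expected distance. -/
noncomputable def Wass {X : Type*} [MetricSpace X] (φ ψ : X → ℝ) : ℝ :=
  sInf { c : ℝ | ∃ γ : X → X → ℝ,
    (∀ x y, 0 ≤ γ x y) ∧
    (Set.Finite (Function.support fun p : X × X => γ p.1 p.2)) ∧
    (∀ x, ∑ᶠ y, γ x y = φ x) ∧
    (∀ y, ∑ᶠ x, γ x y = ψ y) ∧
    c = ∑ᶠ (x : X) (y : X), γ x y * dist x y }

private lemma lemA {X : Type*} {n : ℕ} (x : Fin n → X) (A : Finset (Fin n)) (g : X → ℝ) :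
    ∑ᶠ v, ((A.filter fun i => x i = v).card : ℝ) * g v = ∑ i ∈ A, g (x i) := by
  have hsub : (Function.support fun v => ((A.filter fun i => x i = v).card : ℝ) * g v)
      ⊆ ↑(A.image x) := by
    intro v hv
    simp only [Function.mem_support, ne_eq] at hv
    by_contra h
    apply hv
    have he : (A.filter fun i => x i = v) = ∅ := by
      ext i
      simp only [Finset.mem_filter, Finset.notMem_empty, iff_false, not_and]
      intro hi hxi
      exact h (Finset.mem_coe.mpr (Finset.mem_image.mpr ⟨i, hi, hxi⟩))
    rw [he]; simp
  rw [finsum_eq_sum_of_support_subset _ hsub, Finset.sum_comp g x]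
  exact Finset.sum_congr rfl fun b _ => (nsmul_eq_mul _ _).symm

private lemma suppA {X : Type*} {n : ℕ} (x : Fin n → X) (A : Finset (Fin n)) {D : ℝ}
    {v : X} (hv : ((A.filter fun i => x i = v).card : ℝ) / D ≠ 0) : v ∈ ↑(A.image x) := by
  have : (A.filter fun i => x i = v).Nonempty := by
    rw [Finset.nonempty_iff_ne_empty]
    intro he
    rw [he] at hv; simp at hv
  obtain ⟨i, hi⟩ := this
  simp only [Finset.mem_filter] at hi
  exact Finset.mem_coe.mpr (Finset.mem_image.mpr ⟨i, hi.1, hi.2⟩)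

theorem multifacility_social_cost_le_panelopt_add_wass
    {X : Type*} [MetricSpace X] {n ℓ : ℕ} (hn : 0 < n) (hl : 0 < ℓ)
    (x : Fin n → X) (C : Set X) (S : Finset (Fin n)) (hS : S.Nonempty)
    (ybar : Fin ℓ → X) (hybarC : ∀ j, ybar j ∈ C)
    (hopt : ∀ y : Fin ℓ → X, (∀ j, y j ∈ C) →
      (1/(S.card : ℝ)) * ∑ i ∈ S, (⨅ j, dist (x i) (ybar j))
        ≤ (1/(S.card : ℝ)) * ∑ i ∈ S, (⨅ j, dist (x i) (y j))) :
    (1/(n:ℝ)) * ∑ i, (⨅ j, dist (x i) (ybar j))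
      ≤ (1/(S.card : ℝ)) * ∑ i ∈ S, (⨅ j, dist (x i) (ybar j))
        + Wass (fun v => (((Finset.univ : Finset (Fin n)).filter fun i => x i = v).card : ℝ) / (n:ℝ))
               (fun v => ((S.filter fun i => x i = v).card : ℝ) / (S.card : ℝ)) := by
  have hne : Nonempty (Fin ℓ) := ⟨⟨0, hl⟩⟩
  set f : X → ℝ := fun v => ⨅ j, dist v (ybar j) with hf
  set φ : X → ℝ := fun v =>
    (((Finset.univ : Finset (Fin n)).filter fun i => x i = v).card : ℝ) / (n:ℝ) with hφ
  set ψ : X → ℝ := fun v => ((S.filter fun i => x i = v).card : ℝ) / (S.card : ℝ) with hψ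
  have hn0 : (n : ℝ) ≠ 0 := Nat.cast_ne_zero.mpr hn.ne'
  have hS0 : ((S.card : ℝ)) ≠ 0 := Nat.cast_ne_zero.mpr (Finset.card_ne_zero.mpr hS)
  have hbdd : ∀ v : X, BddBelow (Set.range fun j => dist v (ybar j)) :=
    fun v => ⟨0, fun r ⟨j, hj⟩ => hj ▸ dist_nonneg⟩
  have hlip : ∀ a b : X, f a - f b ≤ dist a b := by
    intro a b
    have h1 : ∀ j, f a - dist a b ≤ dist b (ybar j) := fun j => by
      have := le_trans (ciInf_le (hbdd a) j) (dist_triangle a b (ybar j))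
      linarith
    have h2 : f a - dist a b ≤ f b := le_ciInf h1
    linarith
  -- sums of φ and ψ against a function g
  have hφg : ∀ g : X → ℝ, ∑ᶠ v, φ v * g v = (1/(n:ℝ)) * ∑ i, g (x i) := by
    intro g
    have : ∀ v, φ v * g v =
        (((Finset.univ : Finset (Fin n)).filter fun i => x i = v).card : ℝ) * (g v * (1/(n:ℝ))) := by
      intro v; simp only [hφ]; ring
    rw [finsum_congr this, lemA, ← Finset.sum_mul]
    ring
  have hψg : ∀ g : X → ℝ, ∑ᶠ v, ψ v * g v = (1/(S.card:ℝ)) * ∑ i ∈ S, g (x i) := by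
    intro g
    have : ∀ v, ψ v * g v =
        ((S.filter fun i => x i = v).card : ℝ) * (g v * (1/(S.card:ℝ))) := by
      intro v; simp only [hψ]; ring
    rw [finsum_congr this, lemA, ← Finset.sum_mul]
    ring
  have hφ1 : ∑ᶠ v, φ v = 1 := by
    have := hφg (fun _ => 1)
    simpa [Finset.card_univ, hn0] using this
  have hψ1 : ∑ᶠ v, ψ v = 1 := by
    have := hψg (fun _ => 1)
    simpa [hS0] using this
  have hφsupp : Function.support φ ⊆ ↑(Finset.univ.image x) := fun v hv => suppA x _ hv
  have hψsupp : Function.support ψ ⊆ ↑(S.image x) := fun v hv => suppA x _ hv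
  -- it suffices to bound the difference by the Wasserstein distance
  suffices h : (1/(n:ℝ)) * ∑ i, f (x i) - (1/(S.card : ℝ)) * ∑ i ∈ S, f (x i)
      ≤ Wass φ ψ by linarith
  rw [Wass]
  apply le_csInf
  · -- the independent coupling shows the set is nonempty
    refine ⟨∑ᶠ (a : X) (b : X), (φ a * ψ b) * dist a b, fun a b => φ a * ψ b,
      fun a b => mul_nonneg (by positivity) (by positivity), ?_, ?_, ?_, rfl⟩
    · apply Set.Finite.subset ((Finset.univ.image x).finite_toSet.prod (S.image x).finite_toSet)
      rintro ⟨a, b⟩ hab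
      simp only [Function.mem_support, ne_eq, mul_eq_zero, not_or] at hab
      exact ⟨hφsupp hab.1, hψsupp hab.2⟩
    · intro a
      have hsub : Function.support (fun b => φ a * ψ b) ⊆ ↑(S.image x) := by
        intro b hb
        simp only [Function.mem_support, ne_eq, mul_eq_zero, not_or] at hb
        exact hψsupp hb.2
      rw [finsum_eq_sum_of_support_subset _ hsub, ← Finset.mul_sum,
        ← finsum_eq_sum_of_support_subset _ hψsupp, hψ1, mul_one]
    · intro b
      have hsub : Function.support (fun a => φ a * ψ b) ⊆ ↑(Finset.univ.image x) := by
        intro a ha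
        simp only [Function.mem_support, ne_eq, mul_eq_zero, not_or] at ha
        exact hφsupp ha.1
      rw [finsum_eq_sum_of_support_subset _ hsub, ← Finset.sum_mul,
        ← finsum_eq_sum_of_support_subset _ hφsupp, hφ1, one_mul]
  · -- every coupling cost bounds the difference
    rintro c ⟨γ, h0, hfin, hm1, hm2, rfl⟩
    set T : Finset (X × X) := hfin.toFinset with hT
    set s : Finset X := T.image Prod.fst ∪ T.image Prod.snd with hs
    have hmem : ∀ a b : X, γ a b ≠ 0 → a ∈ s ∧ b ∈ s := by
      intro a b hab
      have hT' : (a, b) ∈ T := by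
        rw [hT, Set.Finite.mem_toFinset]; exact hab
      constructor
      · exact Finset.mem_union_left _ (Finset.mem_image.mpr ⟨(a, b), hT', rfl⟩)
      · exact Finset.mem_union_right _ (Finset.mem_image.mpr ⟨(a, b), hT', rfl⟩)
    have hrow : ∀ a : X, Function.support (γ a) ⊆ ↑s := fun a b hb => (hmem a b hb).2
    have hcol : ∀ b : X, Function.support (fun a => γ a b) ⊆ ↑s :=
      fun b a ha => (hmem a b ha).1
    have hma : ∀ a, φ a = ∑ b ∈ s, γ a b :=
      fun a => (hm1 a).symm.trans (finsum_eq_sum_of_support_subset _ (hrow a))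
    have hmb : ∀ b, ψ b = ∑ a ∈ s, γ a b :=
      fun b => (hm2 b).symm.trans (finsum_eq_sum_of_support_subset _ (hcol b))
    have hφs : Function.support φ ⊆ ↑s := by
      intro a ha
      rw [Function.mem_support, hma a] at ha
      obtain ⟨b, _, hb⟩ := Finset.exists_ne_zero_of_sum_ne_zero ha
      exact (hmem a b hb).1
    have hψs : Function.support ψ ⊆ ↑s := by
      intro b hb
      rw [Function.mem_support, hmb b] at hb
      obtain ⟨a, _, ha⟩ := Finset.exists_ne_zero_of_sum_ne_zero hb
      exact (hmem a b ha).2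
    -- rewrite the two costs as sums against φ, ψ
    have e1 : (1/(n:ℝ)) * ∑ i, f (x i) = ∑ a ∈ s, ∑ b ∈ s, γ a b * f a := by
      rw [← hφg f, finsum_eq_sum_of_support_subset _
        (Function.support_subset_iff.mpr fun v hv => hφs (fun h => hv (by rw [h, zero_mul])))]
      exact Finset.sum_congr rfl fun a _ => by rw [hma a, Finset.sum_mul]
    have e2 : (1/(S.card:ℝ)) * ∑ i ∈ S, f (x i) = ∑ a ∈ s, ∑ b ∈ s, γ a b * f b := by
      rw [← hψg f, finsum_eq_sum_of_support_subset _
        (Function.support_subset_iff.mpr fun v hv => hψs (fun h => hv (by rw [h, zero_mul]))),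
        Finset.sum_comm]
      exact Finset.sum_congr rfl fun b _ => by rw [hmb b, Finset.sum_mul]
    have e3 : ∑ᶠ (a : X) (b : X), γ a b * dist a b
        = ∑ a ∈ s, ∑ b ∈ s, γ a b * dist a b := by
      have hin : ∀ a : X, ∑ᶠ b, γ a b * dist a b = ∑ b ∈ s, γ a b * dist a b := by
        intro a
        apply finsum_eq_sum_of_support_subset
        intro b hb
        exact hrow a (fun h => hb (by simp only [Function.mem_support]; rw [h, zero_mul]))
      rw [finsum_congr hin]
      apply finsum_eq_sum_of_support_subset
      intro a ha
      rw [Function.mem_support] at ha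
      by_contra hna
      apply ha
      apply Finset.sum_eq_zero
      intro b _
      have : γ a b = 0 := by
        by_contra hg; exact hna ((hmem a b hg).1)
      rw [this, zero_mul]
    rw [e1, e2, e3, ← Finset.sum_sub_distrib]
    apply Finset.sum_le_sum
    intro a _
    rw [← Finset.sum_sub_distrib]
    apply Finset.sum_le_sum
    intro b _
    rw [← mul_sub]
    exact mul_le_mul_of_nonneg_left (hlip a b) (h0 a b)
end

section
/- Fix t ≥ 1 and w ≥ 2; let c = (1/2,…,1/2) ∈ [0,1]^t and e_j be half the j-th standard basis vector (entry 1/2 at coordinate j). With distance ℓ∞ on [0,1]^t, consider a population where a fraction (1+z_j/w)/(2t) of agents is located at c + e_j and a fraction (1−z_j/w)/(2t) at c − e_j, for z ∈ {−1,+1}^t. Then the point q⋆ = c + ∑_{j∈[t]} (1/2)·z_j·e_j satisfies SocialCost(q⋆) = 1/2 − 1/(4w), and for any candidate q ∈ [1/4, 3/4]^t and any coordinate j, the contribution of coordinate-j agents to the social cost is at least 1/(2t) − 1/(4tw); moreover if q_j ≤ 1/2 and z_j = +1 (or q_j ≥ 1/2 and z_j = −1), that contribution is at least 1/(2t). -/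
open scoped Classical

-- auxiliary arithmetic lemma
lemma contrib_arith (t w : ℕ) (ht : 1 ≤ t) (hw : 2 ≤ w) (zj qj : ℝ)
    (_hzj : zj = 1 ∨ zj = -1) :
    (1 + zj / (w:ℝ)) / (2*(t:ℝ)) * (1 - qj) + (1 - zj / (w:ℝ)) / (2*(t:ℝ)) * qj
      = 1/(2*(t:ℝ)) + (zj/(2*(t:ℝ)*(w:ℝ))) * (1 - 2*qj) := by
  have ht' : (t:ℝ) ≠ 0 := by positivity
  have hw' : (w:ℝ) ≠ 0 := by positivity
  field_simp
  ring

theorem facility_lower_bound_computation (t w : ℕ) (ht : 1 ≤ t) (hw : 2 ≤ w)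
    (z : Fin t → ℝ) (hz : ∀ j, z j = 1 ∨ z j = -1) :
    let c : Fin t → ℝ := fun _ => 1/2
    let e : Fin t → Fin t → ℝ := fun j i => if i = j then 1/2 else 0
    let qstar : Fin t → ℝ := fun i => 1/2 + z i / 4
    let contrib : Fin t → (Fin t → ℝ) → ℝ := fun j q =>
      ((1 + z j / (w:ℝ)) / (2*(t:ℝ))) * ‖(c + e j) - q‖
        + ((1 - z j / (w:ℝ)) / (2*(t:ℝ))) * ‖(c - e j) - q‖
    -- social cost of q⋆
    (∑ j, contrib j qstar = 1/2 - 1/(4*(w:ℝ))) ∧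
    -- per-coordinate lower bound for any candidate q ∈ [1/4,3/4]^t
    (∀ q : Fin t → ℝ, (∀ i, q i ∈ Set.Icc (1/4 : ℝ) (3/4)) → ∀ j,
      1/(2*(t:ℝ)) - 1/(4*(t:ℝ)*(w:ℝ)) ≤ contrib j q) ∧
    -- strengthened bound when q disagrees with the sign z_j
    (∀ q : Fin t → ℝ, (∀ i, q i ∈ Set.Icc (1/4 : ℝ) (3/4)) → ∀ j,
      ((q j ≤ 1/2 ∧ z j = 1) ∨ (1/2 ≤ q j ∧ z j = -1)) →
      1/(2*(t:ℝ)) ≤ contrib j q) := by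
  intro c e qstar contrib
  have ht' : (0:ℝ) < (t:ℝ) := by exact_mod_cast Nat.lt_of_lt_of_le Nat.zero_lt_one ht
  have hw' : (0:ℝ) < (w:ℝ) := by positivity
  have hw2 : (2:ℝ) ≤ (w:ℝ) := by exact_mod_cast hw
  have ht0 : (t:ℝ) ≠ 0 := ne_of_gt ht'
  have hw0 : (w:ℝ) ≠ 0 := ne_of_gt hw'
  have hinv : (1:ℝ)/(w:ℝ) ≤ 1/2 := by
    rw [div_le_div_iff₀ hw' (by norm_num)]; linarith
  have hinv0 : (0:ℝ) ≤ 1/(w:ℝ) := by positivity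
  -- nonnegativity of weights
  have hA : ∀ j : Fin t, 0 ≤ (1 + z j / (w:ℝ)) / (2*(t:ℝ)) := by
    intro j
    apply div_nonneg _ (by positivity)
    rcases hz j with h | h <;> rw [h]
    · linarith
    · rw [neg_div]; linarith
  have hB : ∀ j : Fin t, 0 ≤ (1 - z j / (w:ℝ)) / (2*(t:ℝ)) := by
    intro j
    apply div_nonneg _ (by positivity)
    rcases hz j with h | h <;> rw [h]
    · linarith
    · rw [neg_div]; linarith
  -- key lower bound on contrib j q via coordinate j
  have hcontrib_ge : ∀ (q : Fin t → ℝ), (∀ i, q i ∈ Set.Icc (1/4 : ℝ) (3/4)) → ∀ j,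
      1/(2*(t:ℝ)) + (z j/(2*(t:ℝ)*(w:ℝ))) * (1 - 2 * q j) ≤ contrib j q := by
    intro q hq j
    have hq1 := (hq j).1
    have hq2 := (hq j).2
    have hNp : 1 - q j ≤ ‖(c + e j) - q‖ := by
      have h1 : ‖((c + e j) - q) j‖ ≤ ‖(c + e j) - q‖ := norm_le_pi_norm _ j
      have h2 : ((c + e j) - q) j = 1 - q j := by
        show (1:ℝ)/2 + (if j = j then (1:ℝ)/2 else 0) - q j = 1 - q j
        rw [if_pos rfl]; ring
      rw [h2, Real.norm_eq_abs] at h1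
      exact le_trans (le_abs_self _) h1
    have hNm : q j ≤ ‖(c - e j) - q‖ := by
      have h1 : ‖((c - e j) - q) j‖ ≤ ‖(c - e j) - q‖ := norm_le_pi_norm _ j
      have h2 : ((c - e j) - q) j = -(q j) := by
        show (1:ℝ)/2 - (if j = j then (1:ℝ)/2 else 0) - q j = -(q j)
        rw [if_pos rfl]; ring
      rw [h2, Real.norm_eq_abs, abs_neg] at h1
      exact le_trans (le_abs_self _) h1
    have step : (1 + z j / (w:ℝ)) / (2*(t:ℝ)) * (1 - q j)
        + (1 - z j / (w:ℝ)) / (2*(t:ℝ)) * q j ≤ contrib j q := by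
      simp only [contrib]
      gcongr
      · exact hA j
      · exact hB j
    calc 1/(2*(t:ℝ)) + (z j/(2*(t:ℝ)*(w:ℝ))) * (1 - 2 * q j)
        = (1 + z j / (w:ℝ)) / (2*(t:ℝ)) * (1 - q j)
          + (1 - z j / (w:ℝ)) / (2*(t:ℝ)) * q j :=
          (contrib_arith t w ht hw (z j) (q j) (hz j)).symm
      _ ≤ contrib j q := step
  refine ⟨?_, ?_, ?_⟩
  · -- exact value at qstar
    have hval : ∀ j, contrib j qstar = 1/(2*(t:ℝ)) - 1/(4*(t:ℝ)*(w:ℝ)) := by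
      intro j
      have hNp : ‖(c + e j) - qstar‖ = 1/2 - z j / 4 := by
        have hnn : (0:ℝ) ≤ 1/2 - z j / 4 := by rcases hz j with h | h <;> rw [h] <;> norm_num
        refine le_antisymm ?_ ?_
        · rw [pi_norm_le_iff_of_nonneg hnn]
          intro i
          by_cases hij : i = j
          · subst hij
            have hcomp : ((c + e i) - qstar) i = 1/2 - z i / 4 := by
              show (1:ℝ)/2 + (if i = i then (1:ℝ)/2 else 0) - (1/2 + z i / 4) = 1/2 - z i / 4
              rw [if_pos rfl]; ring
            rw [hcomp, Real.norm_eq_abs, abs_of_nonneg hnn]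
          · have hcomp : ((c + e j) - qstar) i = -(z i / 4) := by
              show (1:ℝ)/2 + (if i = j then (1:ℝ)/2 else 0) - (1/2 + z i / 4) = -(z i / 4)
              rw [if_neg hij]; ring
            rw [hcomp, Real.norm_eq_abs]
            rcases hz i with h | h <;> rcases hz j with h' | h' <;> rw [h, h'] <;> rw [abs_le] <;> norm_num
        · have h1 : ‖((c + e j) - qstar) j‖ ≤ ‖(c + e j) - qstar‖ := norm_le_pi_norm _ j
          have hcomp : ((c + e j) - qstar) j = 1/2 - z j / 4 := by
            show (1:ℝ)/2 + (if j = j then (1:ℝ)/2 else 0) - (1/2 + z j / 4) = 1/2 - z j / 4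
            rw [if_pos rfl]; ring
          rw [hcomp, Real.norm_eq_abs, abs_of_nonneg hnn] at h1
          exact h1
      have hNm : ‖(c - e j) - qstar‖ = 1/2 + z j / 4 := by
        have hnn : (0:ℝ) ≤ 1/2 + z j / 4 := by rcases hz j with h | h <;> rw [h] <;> norm_num
        refine le_antisymm ?_ ?_
        · rw [pi_norm_le_iff_of_nonneg hnn]
          intro i
          by_cases hij : i = j
          · subst hij
            have hcomp : ((c - e i) - qstar) i = -(1/2 + z i / 4) := by
              show (1:ℝ)/2 - (if i = i then (1:ℝ)/2 else 0) - (1/2 + z i / 4) = -(1/2 + z i / 4)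
              rw [if_pos rfl]; ring
            rw [hcomp, Real.norm_eq_abs, abs_neg, abs_of_nonneg hnn]
          · have hcomp : ((c - e j) - qstar) i = -(z i / 4) := by
              show (1:ℝ)/2 - (if i = j then (1:ℝ)/2 else 0) - (1/2 + z i / 4) = -(z i / 4)
              rw [if_neg hij]; ring
            rw [hcomp, Real.norm_eq_abs]
            rcases hz i with h | h <;> rcases hz j with h' | h' <;> rw [h, h'] <;> rw [abs_le] <;> norm_num
        · have h1 : ‖((c - e j) - qstar) j‖ ≤ ‖(c - e j) - qstar‖ := norm_le_pi_norm _ j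
          have hcomp : ((c - e j) - qstar) j = -(1/2 + z j / 4) := by
            show (1:ℝ)/2 - (if j = j then (1:ℝ)/2 else 0) - (1/2 + z j / 4) = -(1/2 + z j / 4)
            rw [if_pos rfl]; ring
          rw [hcomp, Real.norm_eq_abs, abs_neg, abs_of_nonneg hnn] at h1
          exact h1
      simp only [contrib]
      rcases hz j with h | h <;> rw [hNp, hNm, h] <;> field_simp <;> ring
    rw [Finset.sum_congr rfl (fun j _ => hval j), Finset.sum_const, Finset.card_univ,
      Fintype.card_fin, nsmul_eq_mul]
    field_simp
  · -- general lower bound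
    intro q hq j
    refine le_trans ?_ (hcontrib_ge q hq j)
    have hq1 := (hq j).1
    have hq2 := (hq j).2
    have hfac : -(1/2 : ℝ) ≤ z j * (1 - 2 * q j) := by
      rcases hz j with h | h <;> rw [h] <;> nlinarith
    have hkey : -(1/(4*(t:ℝ)*(w:ℝ))) ≤ (z j/(2*(t:ℝ)*(w:ℝ))) * (1 - 2 * q j) := by
      have hpos : (0:ℝ) < 1/(2*(t:ℝ)*(w:ℝ)) := by positivity
      have := mul_le_mul_of_nonneg_left hfac (le_of_lt hpos)
      calc -(1/(4*(t:ℝ)*(w:ℝ))) = 1/(2*(t:ℝ)*(w:ℝ)) * (-(1/2)) := by ring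
        _ ≤ 1/(2*(t:ℝ)*(w:ℝ)) * (z j * (1 - 2 * q j)) := this
        _ = (z j/(2*(t:ℝ)*(w:ℝ))) * (1 - 2 * q j) := by ring
    linarith
  · -- strengthened bound
    intro q hq j hdis
    refine le_trans ?_ (hcontrib_ge q hq j)
    have hkey : (0:ℝ) ≤ (z j/(2*(t:ℝ)*(w:ℝ))) * (1 - 2 * q j) := by
      rcases hdis with ⟨hqj, hzj⟩ | ⟨hqj, hzj⟩ <;> rw [hzj]
      · have h1 : (0:ℝ) ≤ 1 - 2 * q j := by linarith
        positivity
      · have h1 : (0:ℝ) ≤ 2 * q j - 1 := by linarith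
        have heq : ((-1:ℝ))/(2*(t:ℝ)*(w:ℝ)) * (1 - 2 * q j)
            = (1/(2*(t:ℝ)*(w:ℝ))) * (2 * q j - 1) := by ring
        rw [heq]
        exact mul_nonneg (by positivity) h1
    linarith
end
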